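/- Let κ_n : ℝ → ℝ (n ∈ ℕ) and κ : ℝ → ℝ be continuous functions such that κ_n → κ uniformly on every compact subset of ℝ. If for every n every Jacobi solution for κ_n that vanishes at two distinct points is identically zero, then every Jacobi solution for κ that vanishes at two distinct points is identically zero. -/

import Mathlib

open Set Filter

/-- A Jacobi solution for `κ` on `ℝ`: a `C²` function with `z'' + κ z = 0`. -/
def IsJacobi (κ z : ℝ → ℝ) : Prop :=
  ContDiff ℝ 2 z ∧ ∀ t, deriv (deriv z) t + κ t * z t = 0

/-- `κ` is disconjugate: every Jacobi solution for `κ` that vanishes at two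
distinct points is identically zero. -/
def Disconjugate (κ : ℝ → ℝ) : Prop :=
  ∀ z : ℝ → ℝ, IsJacobi κ z →
    ∀ a b : ℝ, a ≠ b → z a = 0 → z b = 0 → ∀ t, z t = 0

/-!
Suppose a Jacobi solution `z` for `κ` vanishes at `a < b` but not identically. By uniqueness for
the first-order system `(z, z')' = (z', -κ z)` its zeros are simple, so `z` changes sign at `b`.
Let `zₙ` be the Jacobi solution for `κₙ` with the initial data `(0, z'(a))` of `z` at `a`. On a
compact interval the system for `κₙ` is uniformly Lipschitz and `z` solves it up to an error
`sup |κₙ - κ| · sup |z|`, so Grönwall's inequality gives `zₙ → z` pointwise. For large `n` the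
solution `zₙ` therefore changes sign near `b` and vanishes at some `c > a`; disconjugacy of `κₙ`
forces `zₙ = 0`, contradicting `zₙ'(a) = z'(a) ≠ 0`.

Global solutions of a linear system `x' = A(t) x` with continuous coefficients are obtained by
chaining Picard–Lindelöf solutions over intervals of length at most `1 / (2 (1 + sup ‖A‖))`.
-/

open scoped NNReal Topology

theorem IsCompact.exists_nnnorm_le_of_continuousOn {α F : Type*} [TopologicalSpace α]
    [SeminormedAddGroup F] {s : Set α} {f : α → F} (hs : IsCompact s) (hf : ContinuousOn f s) :
    ∃ K : ℝ≥0, ∀ x ∈ s, ‖f x‖₊ ≤ K := by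
  obtain ⟨K, hK⟩ := hs.bddAbove_image hf.nnnorm
  exact ⟨K, fun x hx => hK (mem_image_of_mem _ hx)⟩

section LinearODE

variable {E : Type*} [NormedAddCommGroup E] [NormedSpace ℝ E]

theorem IsIntegralCurveOn.hasDerivWithinAt_of_eqOn {f γ : ℝ → E} {v : ℝ → E → E} {s : Set ℝ}
    (hf : IsIntegralCurveOn f v s) (hs : IsClosed s) (hγ : EqOn γ f s) (t : ℝ) :
    HasDerivWithinAt γ (v t (γ t)) s t := by
  by_cases ht : t ∈ s
  · rw [hγ ht]
    exact (hf t ht).congr hγ (hγ ht)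
  · exact HasFDerivWithinAt.of_notMem_closure (by rwa [hs.closure_eq])

theorem IsIntegralCurveOn.union_of_eqOn {f g γ : ℝ → E} {v : ℝ → E → E} {s s' : Set ℝ}
    (hf : IsIntegralCurveOn f v s) (hg : IsIntegralCurveOn g v s') (hs : IsClosed s)
    (hs' : IsClosed s') (hγf : EqOn γ f s) (hγg : EqOn γ g s') :
    IsIntegralCurveOn γ v (s ∪ s') := fun t _ =>
  (hf.hasDerivWithinAt_of_eqOn hs hγf t).union (hg.hasDerivWithinAt_of_eqOn hs' hγg t)

theorem IsIntegralCurveOn.exists_piecewise_Icc {f g : ℝ → E} {v : ℝ → E → E} {a c d : ℝ}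
    (hf : IsIntegralCurveOn f v (Icc a c)) (hg : IsIntegralCurveOn g v (Icc c d))
    (hac : a ≤ c) (hcd : c ≤ d) (hfg : f c = g c) :
    ∃ γ, EqOn γ f (Icc a c) ∧ EqOn γ g (Icc c d) ∧ IsIntegralCurveOn γ v (Icc a d) := by
  classical
  have hγf : EqOn (fun t => if t ≤ c then f t else g t) f (Icc a c) := fun t ht => if_pos ht.2
  have hγg : EqOn (fun t => if t ≤ c then f t else g t) g (Icc c d) := fun t ht => by
    by_cases htc : t ≤ c
    · simp only [le_antisymm htc ht.1, hfg, ite_self]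
    · exact if_neg htc
  refine ⟨_, hγf, hγg, ?_⟩
  rw [← Icc_union_Icc_eq_Icc hac hcd]
  exact hf.union_of_eqOn hg isClosed_Icc isClosed_Icc hγf hγg

theorem exists_isIntegralCurveOn_Icc_of_forall_sub_le {v : ℝ → E → E} {a b h : ℝ} (hh : 0 < h)
    (hshort : ∀ c d, a ≤ c → d ≤ b → d - c ≤ h → ∀ t₀ ∈ Icc c d, ∀ x₀ : E,
      ∃ f, f t₀ = x₀ ∧ IsIntegralCurveOn f v (Icc c d))
    {t₀ : ℝ} (ht₀ : t₀ ∈ Icc a b) (x₀ : E) :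
    ∃ f, f t₀ = x₀ ∧ IsIntegralCurveOn f v (Icc a b) := by
  suffices H : ∀ n : ℕ, ∀ c d, a ≤ c → d ≤ b → d - c ≤ (n + 1) * h → ∀ t₀ ∈ Icc c d, ∀ x₀ : E,
      ∃ f, f t₀ = x₀ ∧ IsIntegralCurveOn f v (Icc c d) by
    obtain ⟨n, hn⟩ := exists_nat_ge ((b - a) / h)
    refine H n a b le_rfl le_rfl ?_ t₀ ht₀ x₀
    rw [div_le_iff₀ hh] at hn
    nlinarith
  intro n
  induction n with
  | zero => simpa using hshort
  | succ n ih =>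
    intro c d hac hdb hlen t₀ ht₀ x₀
    by_cases hshorter : d - c ≤ (n + 1) * h
    · exact ih c d hac hdb hshorter t₀ ht₀ x₀
    set m := c + (n + 1) * h
    have hcm : c ≤ m := le_add_of_nonneg_right (by positivity)
    have hmd : m ≤ d := by simp only [m]; linarith
    have hmb : m ≤ b := hmd.trans hdb
    have hlen_right : d - m ≤ h := by simp only [m]; push_cast at hlen; linarith
    rcases le_total t₀ m with htm | hmt
    · obtain ⟨f, hf₀, hf⟩ := ih c m hac hmb (by simp [m]) t₀ ⟨ht₀.1, htm⟩ x₀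
      obtain ⟨g, hg₀, hg⟩ := hshort m d (hac.trans hcm) hdb hlen_right m ⟨le_rfl, hmd⟩ (f m)
      obtain ⟨γ, hγf, -, hγ⟩ := hf.exists_piecewise_Icc hg hcm hmd hg₀.symm
      exact ⟨γ, (hγf ⟨ht₀.1, htm⟩).trans hf₀, hγ⟩
    · obtain ⟨g, hg₀, hg⟩ := hshort m d (hac.trans hcm) hdb hlen_right t₀ ⟨hmt, ht₀.2⟩ x₀
      obtain ⟨f, hf₀, hf⟩ := ih c m hac hmb (by simp [m]) m ⟨hcm, le_rfl⟩ (g m)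
      obtain ⟨γ, -, hγg, hγ⟩ := hf.exists_piecewise_Icc hg hcm hmd hf₀
      exact ⟨γ, (hγg ⟨hmt, ht₀.2⟩).trans hg₀, hγ⟩

variable {A : ℝ → E →L[ℝ] E} {a b t₀ : ℝ}

theorem exists_isIntegralCurveOn_Icc_of_mul_le [CompleteSpace E] {K : ℝ≥0}
    (hA : ContinuousOn A (Icc a b)) (hK : ∀ t ∈ Icc a b, ‖A t‖₊ ≤ K) (ht₀ : t₀ ∈ Icc a b)
    (hlen : 2 * K * (b - a) ≤ 1) (x₀ : E) :
    ∃ f, f t₀ = x₀ ∧ IsIntegralCurveOn f (fun t => A t) (Icc a b) := by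
  have hPL : IsPicardLindelof (fun t => A t) (tmin := a) (tmax := b) ⟨t₀, ht₀⟩ x₀
      (‖x₀‖₊ + 1) 0 (K * (2 * ‖x₀‖₊ + 1)) K := by
    refine ⟨fun t ht => ((A t).lipschitz.weaken (hK t ht)).lipschitzOnWith,
      fun x _ => hA.clm_apply continuousOn_const, fun t ht x hx => ?_, ?_⟩
    · have hx : ‖x‖ ≤ 2 * ‖x₀‖ + 1 := by
        have := norm_le_norm_add_norm_sub' x x₀
        rw [Metric.mem_closedBall, dist_eq_norm] at hx
        push_cast at hx
        linarith
      calc ‖A t x‖ ≤ ‖A t‖ * ‖x‖ := (A t).le_opNorm x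
        _ ≤ K * (2 * ‖x₀‖ + 1) := mul_le_mul (hK t ht) hx (norm_nonneg _) K.2
        _ = _ := by push_cast; ring
    · have hmax : max (b - t₀) (t₀ - a) ≤ b - a :=
        max_le (by linarith [ht₀.1]) (by linarith [ht₀.2])
      have hK0 : (0 : ℝ) ≤ K := K.2
      push_cast
      nlinarith [norm_nonneg x₀, mul_le_mul_of_nonneg_left hmax
        (by positivity : (0 : ℝ) ≤ K * (2 * ‖x₀‖ + 1))]
  exact hPL.exists_eq_forall_mem_Icc_hasDerivWithinAt₀

theorem exists_isIntegralCurveOn_Icc_of_continuousOn [CompleteSpace E]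
    (hA : ContinuousOn A (Icc a b)) (ht₀ : t₀ ∈ Icc a b) (x₀ : E) :
    ∃ f, f t₀ = x₀ ∧ IsIntegralCurveOn f (fun t => A t) (Icc a b) := by
  obtain ⟨K, hK⟩ := isCompact_Icc.exists_nnnorm_le_of_continuousOn hA
  refine exists_isIntegralCurveOn_Icc_of_forall_sub_le (h := 1 / (2 * (K + 1))) (by positivity)
    (fun c d hac hdb hlen t₁ ht₁ x₁ => ?_) ht₀ x₀
  have hcd : Icc c d ⊆ Icc a b := Icc_subset_Icc hac hdb
  refine exists_isIntegralCurveOn_Icc_of_mul_le (hA.mono hcd) (fun t ht => hK t (hcd ht)) ht₁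
    ?_ x₁
  have hK0 : (0 : ℝ) ≤ K := K.2
  rw [le_div_iff₀ (by positivity)] at hlen
  nlinarith [ht₁.1.trans ht₁.2]

theorem IsIntegralCurveOn.hasDerivWithinAt_Ici {f : ℝ → E} {v : ℝ → E → E} {t : ℝ}
    (hf : IsIntegralCurveOn f v (Icc a b)) (ht : t ∈ Ico a b) :
    HasDerivWithinAt f (v t (f t)) (Ici t) t :=
  (hf t (Ico_subset_Icc_self ht)).mono_of_mem_nhdsWithin (Icc_mem_nhdsGE_of_mem ht)

theorem IsIntegralCurveOn.hasDerivWithinAt_Iic {f : ℝ → E} {v : ℝ → E → E} {t : ℝ}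
    (hf : IsIntegralCurveOn f v (Icc a b)) (ht : t ∈ Ioc a b) :
    HasDerivWithinAt f (v t (f t)) (Iic t) t :=
  (hf t (Ioc_subset_Icc_self ht)).mono_of_mem_nhdsWithin (Icc_mem_nhdsLE_of_mem ht)

theorem IsIntegralCurveOn.eqOn_Icc {f g : ℝ → E} (hA : ContinuousOn A (Icc a b))
    (hf : IsIntegralCurveOn f (fun t => A t) (Icc a b))
    (hg : IsIntegralCurveOn g (fun t => A t) (Icc a b)) (ht₀ : t₀ ∈ Icc a b)
    (hfg : f t₀ = g t₀) : EqOn f g (Icc a b) := by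
  obtain ⟨K, hK⟩ := isCompact_Icc.exists_nnnorm_le_of_continuousOn hA
  have hlip : ∀ t ∈ Icc a b, LipschitzOnWith K (A t) univ := fun t ht =>
    ((A t).lipschitz.weaken (hK t ht)).lipschitzOnWith
  have hleft : Icc a t₀ ⊆ Icc a b := Icc_subset_Icc_right ht₀.2
  have hright : Icc t₀ b ⊆ Icc a b := Icc_subset_Icc_left ht₀.1
  rw [← Icc_union_Icc_eq_Icc ht₀.1 ht₀.2]
  refine EqOn.union ?_ ?_
  · exact ODE_solution_unique_of_mem_Icc_left (fun t ht => hlip t (hleft (Ioc_subset_Icc_self ht)))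
      (hf.continuousOn.mono hleft) (fun t ht => (hf.mono hleft).hasDerivWithinAt_Iic ht)
      (fun _ _ => mem_univ _) (hg.continuousOn.mono hleft)
      (fun t ht => (hg.mono hleft).hasDerivWithinAt_Iic ht) (fun _ _ => mem_univ _) hfg
  · exact ODE_solution_unique_of_mem_Icc_right
      (fun t ht => hlip t (hright (Ico_subset_Icc_self ht)))
      (hf.continuousOn.mono hright) (fun t ht => (hf.mono hright).hasDerivWithinAt_Ici ht)
      (fun _ _ => mem_univ _) (hg.continuousOn.mono hright)
      (fun t ht => (hg.mono hright).hasDerivWithinAt_Ici ht) (fun _ _ => mem_univ _) hfg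

theorem exists_isIntegralCurve_of_continuous [CompleteSpace E] (hA : Continuous A) (t₀ : ℝ)
    (x₀ : E) :
    ∃ f, f t₀ = x₀ ∧ IsIntegralCurve f (fun t => A t) := by
  have hI : ∀ n : ℕ, t₀ ∈ Icc (t₀ - n) (t₀ + n) := fun n => mem_Icc_iff_abs_le.mp (by simp)
  choose sol hsol₀ hsol using fun n =>
    exists_isIntegralCurveOn_Icc_of_continuousOn hA.continuousOn (hI n) x₀
  have hcompat : ∀ m n : ℕ, m ≤ n → EqOn (sol m) (sol n) (Icc (t₀ - m) (t₀ + m)) := fun m n hmn =>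
    (hsol m).eqOn_Icc hA.continuousOn ((hsol n).mono (Icc_subset_Icc (by gcongr) (by gcongr)))
      (hI m) ((hsol₀ m).trans (hsol₀ n).symm)
  have hagree : ∀ m n : ℕ, ∀ s, |t₀ - s| ≤ m → |t₀ - s| ≤ n → sol m s = sol n s := by
    intro m n s hm hn
    rcases le_total m n with hmn | hnm
    · exact hcompat m n hmn (mem_Icc_iff_abs_le.mp hm)
    · exact (hcompat n m hnm (mem_Icc_iff_abs_le.mp hn)).symm
  set N : ℝ → ℕ := fun t => ⌈|t₀ - t|⌉₊ + 1
  have hN : ∀ t, |t₀ - t| < N t := fun t => (Nat.le_ceil _).trans_lt (by simp [N])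
  refine ⟨fun t => sol (N t) t, hsol₀ _, fun t => ?_⟩
  have hnhds : Ioo (t₀ - N t) (t₀ + N t) ∈ 𝓝 t := by
    refine Ioo_mem_nhds ?_ ?_ <;> linarith [abs_lt.mp (hN t)]
  have heq : (fun s => sol (N s) s) =ᶠ[𝓝 t] sol (N t) := by
    filter_upwards [hnhds] with s hs
    exact hagree _ _ s (hN s).le (mem_Icc_iff_abs_le.mpr (Ioo_subset_Icc_self hs))
  exact (((hsol (N t)) t (Ioo_subset_Icc_self (mem_of_mem_nhds hnhds))).hasDerivAt
    (mem_of_superset hnhds Ioo_subset_Icc_self)).congr_of_eventuallyEq heq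

theorem IsIntegralCurve.eq_of_continuous {f g : ℝ → E} (hA : Continuous A)
    (hf : IsIntegralCurve f (fun t => A t)) (hg : IsIntegralCurve g (fun t => A t))
    (hfg : f t₀ = g t₀) : f = g :=
  funext fun t => (hf.isIntegralCurveOn _).eqOn_Icc hA.continuousOn (hg.isIntegralCurveOn _)
    left_mem_uIcc hfg (right_mem_uIcc : t ∈ uIcc t₀ t)

theorem IsIntegralCurveOn.tendsto_of_tendstoUniformlyOn {ι : Type*} {l : Filter ι}
    {B : ι → ℝ → E →L[ℝ] E} {f : ι → ℝ → E} {g : ℝ → E} (hA : ContinuousOn A (Icc a b))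
    (hB : TendstoUniformlyOn B A l (Icc a b))
    (hf : ∀ i, IsIntegralCurveOn (f i) (fun t => B i t) (Icc a b))
    (hg : IsIntegralCurveOn g (fun t => A t) (Icc a b)) (hfg : ∀ i, f i a = g a) {t : ℝ}
    (ht : t ∈ Icc a b) : Tendsto (fun i => f i t) l (𝓝 (g t)) := by
  obtain ⟨K, hK⟩ := isCompact_Icc.exists_nnnorm_le_of_continuousOn hA
  obtain ⟨C, hC⟩ := isCompact_Icc.exists_bound_of_continuousOn hg.continuousOn
  have hC0 : 0 ≤ C := (norm_nonneg _).trans (hC t ht)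
  have hbound : Tendsto (fun δ => gronwallBound 0 (K + 1) (δ * C) (b - a)) (𝓝 0) (𝓝 0) := by
    have := ((gronwallBound_continuous_ε 0 (K + 1) (b - a)).comp (continuous_mul_const C)).tendsto 0
    simpa only [Function.comp_def, zero_mul, gronwallBound_ε0_δ0] using this
  rw [Metric.tendsto_nhds]
  intro ε hε
  obtain ⟨δ, hδε, hδ0, hδ1⟩ := ((hbound.eventually (gt_mem_nhds hε)).filter_mono
    nhdsWithin_le_nhds |>.and (Ioc_mem_nhdsGT zero_lt_one)).exists
  filter_upwards [Metric.tendstoUniformlyOn_iff.mp hB δ hδ0] with i hi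
  have hBK : ∀ s ∈ Icc a b, ‖B i s‖₊ ≤ K + 1 := fun s hs => by
    rw [← NNReal.coe_le_coe, coe_nnnorm]
    push_cast
    have := norm_le_norm_add_norm_sub' (B i s) (A s)
    rw [← dist_eq_norm, dist_comm] at this
    linarith [hi s hs, (hK s hs : ‖A s‖ ≤ K)]
  have hdist := dist_le_of_approx_trajectories_ODE_of_mem (s := fun _ => univ) (δ := 0)
    (fun s hs => ((B i s).lipschitz.weaken (hBK s (Ico_subset_Icc_self hs))).lipschitzOnWith)
    (hf i).continuousOn (fun s hs => (hf i).hasDerivWithinAt_Ici hs)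
    (fun s _ => (dist_self _).le) (fun _ _ => mem_univ _) hg.continuousOn
    (fun s hs => hg.hasDerivWithinAt_Ici hs) (εg := δ * C) (fun s hs => ?_)
    (fun _ _ => mem_univ _) (by rw [hfg, dist_self]) t ht
  · calc dist (f i t) (g t) ≤ gronwallBound 0 (K + 1) (0 + δ * C) (t - a) := hdist
      _ ≤ gronwallBound 0 (K + 1) (δ * C) (b - a) := by
        rw [zero_add]
        exact gronwallBound_mono le_rfl (by positivity) (by positivity) (by linarith [ht.2])
      _ < ε := hδε
  · have hs' := Ico_subset_Icc_self hs
    calc dist (A s (g s)) (B i s (g s)) = ‖(A s - B i s) (g s)‖ := by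
          rw [dist_eq_norm, sub_apply]
      _ ≤ ‖A s - B i s‖ * ‖g s‖ := (A s - B i s).le_opNorm _
      _ ≤ δ * C := by
        rw [← dist_eq_norm]
        exact mul_le_mul (hi s hs').le (hC s hs') (norm_nonneg _) hδ0.le

end LinearODE

theorem HasDerivAt.eventually_mul_neg_of_eq_zero {z : ℝ → ℝ} {b d : ℝ} (hz : HasDerivAt z d b)
    (hzb : z b = 0) (hd : d ≠ 0) : ∀ᶠ η in 𝓝[>] 0, z (b - η) * z (b + η) < 0 := by
  have hslope : Tendsto (fun η => η⁻¹ * z (b + η)) (𝓝[≠] 0) (𝓝 d) := by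
    simpa [hzb] using hasDerivAt_iff_tendsto_slope_zero.mp hz
  have hright := hslope.mono_left (nhdsGT_le_nhdsNE 0)
  have hleft := hslope.comp
    ((nhdsLT_le_nhdsNE 0).trans' (neg_zero (G := ℝ) ▸ tendsto_neg_nhdsGT_neg))
  filter_upwards [(hright.mul hleft).eventually_const_lt (mul_self_pos.2 hd), self_mem_nhdsWithin]
    with η hprod (hη : 0 < η)
  have : η⁻¹ * z (b + η) * ((-η)⁻¹ * z (b + -η)) = -(η⁻¹ ^ 2 * (z (b - η) * z (b + η))) := by
    rw [← sub_eq_add_neg, inv_neg]; ring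
  simp only [Function.comp_apply, this, neg_pos] at hprod
  exact neg_of_mul_neg_right hprod (by positivity)

/-- The Jacobi equation `z'' + κ z = 0` is the linear system
`(z, z')' = jacobiOperator κ t (z, z')`. -/
def jacobiOperator (κ : ℝ → ℝ) (t : ℝ) : ℝ × ℝ →L[ℝ] ℝ × ℝ :=
  (ContinuousLinearMap.inl ℝ ℝ ℝ).comp (ContinuousLinearMap.snd ℝ ℝ ℝ) -
    κ t • (ContinuousLinearMap.inr ℝ ℝ ℝ).comp (ContinuousLinearMap.fst ℝ ℝ ℝ)

@[simp]
theorem jacobiOperator_apply (κ : ℝ → ℝ) (t : ℝ) (x : ℝ × ℝ) :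
    jacobiOperator κ t x = (x.2, -(κ t * x.1)) := by
  simp [jacobiOperator]

theorem continuous_jacobiOperator {κ : ℝ → ℝ} (hκ : Continuous κ) :
    Continuous (jacobiOperator κ) :=
  continuous_const.sub (hκ.smul continuous_const)

theorem TendstoUniformlyOn.jacobiOperator {ι : Type*} {l : Filter ι} {κs : ι → ℝ → ℝ}
    {κ : ℝ → ℝ} {s : Set ℝ} (h : TendstoUniformlyOn κs κ l s) :
    TendstoUniformlyOn (fun i => _root_.jacobiOperator (κs i)) (_root_.jacobiOperator κ) l s :=
  (uniformContinuous_const.sub (ContinuousLinearMap.smulRight (1 : ℝ →L[ℝ] ℝ)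
    ((ContinuousLinearMap.inr ℝ ℝ ℝ).comp (ContinuousLinearMap.fst ℝ ℝ ℝ))).uniformContinuous
    ).comp_tendstoUniformlyOn h

theorem IsJacobi.isIntegralCurve {κ z : ℝ → ℝ} (hz : IsJacobi κ z) :
    IsIntegralCurve (fun t => (z t, deriv z t)) (fun t => jacobiOperator κ t) := fun t => by
  have hz'' : deriv (deriv z) t = -(κ t * z t) := eq_neg_of_add_eq_zero_left (hz.2 t)
  simpa [hz''] using ((hz.1.differentiable (by norm_num) t).hasDerivAt).prodMk
    (hz.1.differentiable_deriv_two t).hasDerivAt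

theorem IsIntegralCurve.hasDerivAt_fst_jacobi {κ : ℝ → ℝ} {f : ℝ → ℝ × ℝ}
    (hf : IsIntegralCurve f (fun t => jacobiOperator κ t)) (t : ℝ) :
    HasDerivAt (fun s => (f s).1) (f t).2 t :=
  ((ContinuousLinearMap.fst ℝ ℝ ℝ).hasFDerivAt.comp_hasDerivAt t (hf t)).congr_deriv (by simp)

theorem IsIntegralCurve.isJacobi_fst {κ : ℝ → ℝ} {f : ℝ → ℝ × ℝ} (hκ : Continuous κ)
    (hf : IsIntegralCurve f (fun t => jacobiOperator κ t)) : IsJacobi κ (fun s => (f s).1) := by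
  have hsnd : ∀ t, HasDerivAt (fun s => (f s).2) (-(κ t * (f t).1)) t := fun t =>
    ((ContinuousLinearMap.snd ℝ ℝ ℝ).hasFDerivAt.comp_hasDerivAt t (hf t)).congr_deriv (by simp)
  have hd : deriv (fun s => (f s).1) = fun s => (f s).2 :=
    funext fun t => (hf.hasDerivAt_fst_jacobi t).deriv
  have hdd : deriv (fun s => (f s).2) = fun t => -(κ t * (f t).1) := funext fun t => (hsnd t).deriv
  refine ⟨?_, fun t => by simp [hd, hdd]⟩
  rw [show (2 : WithTop ℕ∞) = 1 + 1 from rfl, contDiff_succ_iff_deriv, hd, contDiff_one_iff_deriv,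
    hdd]
  exact ⟨fun t => (hf.hasDerivAt_fst_jacobi t).differentiableAt, by simp,
    fun t => (hsnd t).differentiableAt, (hκ.mul hf.continuous.fst).neg⟩

theorem IsJacobi.eq_zero_of_deriv_eq_zero {κ z : ℝ → ℝ} (hκ : Continuous κ) (hz : IsJacobi κ z)
    {t₀ : ℝ} (h₀ : z t₀ = 0) (h₁ : deriv z t₀ = 0) (t : ℝ) : z t = 0 := by
  have hzero : IsIntegralCurve (fun _ => (0 : ℝ × ℝ)) (fun t => jacobiOperator κ t) :=
    fun t => by simpa only [map_zero] using hasDerivAt_const t (0 : ℝ × ℝ)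
  have hzt := hz.isIntegralCurve.eq_of_continuous (continuous_jacobiOperator hκ) hzero
    (t₀ := t₀) (by simp [h₀, h₁])
  exact congrArg Prod.fst (congrFun hzt t)

/-- Disconjugacy passes to locally uniform limits of continuous curvatures. -/
theorem disconjugate_of_locally_uniform_limit
    (κn : ℕ → ℝ → ℝ) (κ : ℝ → ℝ)
    (hκn : ∀ n, Continuous (κn n)) (hκ : Continuous κ)
    (hconv : ∀ K : Set ℝ, IsCompact K → TendstoUniformlyOn κn κ atTop K)
    (hdis : ∀ n, Disconjugate (κn n)) :
    Disconjugate κ := by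
  intro z hz a b hab hza hzb
  wlog hlt : a < b generalizing a b
  · exact this b a hab.symm hzb hza (hab.lt_or_gt.resolve_left hlt)
  by_contra hz0
  have hsimple : ∀ {t₀}, z t₀ = 0 → deriv z t₀ ≠ 0 := fun h₀ h₁ =>
    hz0 (hz.eq_zero_of_deriv_eq_zero hκ h₀ h₁)
  obtain ⟨η, hsign, hη, hηb⟩ := (((hz.1.differentiable (by norm_num) b).hasDerivAt
    |>.eventually_mul_neg_of_eq_zero hzb (hsimple hzb)).and (Ioo_mem_nhdsGT (sub_pos.2 hlt))).exists
  choose f hf₀ hf using fun n =>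
    exists_isIntegralCurve_of_continuous (continuous_jacobiOperator (hκn n)) a (0, deriv z a)
  have hlim : ∀ t ∈ Icc a (b + η), Tendsto (fun n => (f n t).1) atTop (𝓝 (z t)) := fun t ht =>
    (continuous_fst.tendsto _).comp <| IsIntegralCurveOn.tendsto_of_tendstoUniformlyOn
      (continuous_jacobiOperator hκ).continuousOn (hconv _ isCompact_Icc).jacobiOperator
      (fun n => (hf n).isIntegralCurveOn _) (hz.isIntegralCurve.isIntegralCurveOn _)
      (fun n => by simp [hf₀, hza]) ht
  obtain ⟨n, hn⟩ := ((hlim (b - η) ⟨by linarith, by linarith⟩).mul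
    (hlim (b + η) ⟨by linarith, le_rfl⟩) |>.eventually (gt_mem_nhds hsign)).exists
  obtain ⟨c, hc, hfc⟩ : ∃ c ∈ uIcc (b - η) (b + η), (f n c).1 = 0 :=
    intermediate_value_uIcc (hf n).continuous.fst.continuousOn <| by
      rcases mul_neg_iff.1 hn with ⟨h₁, h₂⟩ | ⟨h₁, h₂⟩ <;> simp [mem_uIcc, h₁.le, h₂.le]
  rw [uIcc_of_le (by linarith)] at hc
  have hzero := hdis n _ ((hf n).isJacobi_fst (hκn n)) a c (show a < c by linarith [hc.1]).ne
    (by simp [hf₀]) hfc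
  have hderiv := (hf n).hasDerivAt_fst_jacobi a
  rw [funext hzero, hf₀] at hderiv
  exact hsimple hza (hderiv.unique (hasDerivAt_const a 0))
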